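/- There exist two K₂-quasiperfect dominating sets S and S' of the triangular lattice Δ, each of which possesses three components that are pairwise at graph distance exactly 3 and whose types are 1, 2 and 3 in some order, such that no graph automorphism of Δ maps S onto S'. (Up to symmetry there are at least two K₂-QPDSs in Δ with three pairwise adjacent components of the three different types.) -/

import Mathlib

/-!
Both sets are periodic: they are the preimages of explicit patterns on the tori
`ℤ/5 × ℤ/35` and `ℤ/6 × ℤ/12`. A vertex has as many neighbours in the set as its residue
class has in the pattern, so the `K₂`-QPDS property is a finite check; since the graph
distance of `Δ` is the hexagonal norm `(|x| + |y| + |x + y|) / 2`, so is the rainbow triple.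
The two sets are inequivalent because the first contains two non-adjacent vertices with two
common neighbours (the far corners of a rhombus of two triangles), a configuration preserved
by automorphisms, while the second does not: in `Δ` such pairs differ by one of the six
vectors of `triDiagonals`, and no such vector joins two residues of the second pattern.
-/

open SimpleGraph Set

def triDirs : Set (ℤ × ℤ) := {(1,0), (-1,0), (0,1), (0,-1), (1,-1), (-1,1)}

def triLattice : SimpleGraph (ℤ × ℤ) :=
  SimpleGraph.fromRel (fun u v => u - v ∈ triDirs)

def torLattice (m n : ℕ) : SimpleGraph (ZMod m × ZMod n) :=
  SimpleGraph.fromRel (fun u v =>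
    ∃ d ∈ triDirs, u - v = ((d.1 : ZMod m), (d.2 : ZMod n)))

def IsPDS {V : Type*} (G : SimpleGraph V) (S : Set V) : Prop :=
  ∀ v ∉ S, ∃! u, u ∈ S ∧ G.Adj v u

def IsSPDS {V : Type*} (G : SimpleGraph V) (S : Set V) : Prop :=
  ∀ v ∉ S, {u | u ∈ S ∧ G.Adj v u}.ncard = 2

def IsQPDS {V : Type*} (G : SimpleGraph V) (S : Set V) : Prop :=
  ∀ v ∉ S, {u | u ∈ S ∧ G.Adj v u}.ncard = 1 ∨ {u | u ∈ S ∧ G.Adj v u}.ncard = 2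

def IsK2QPDS {V : Type*} (G : SimpleGraph V) (S : Set V) : Prop :=
  IsQPDS G S ∧ ∀ v ∈ S, {u | u ∈ S ∧ G.Adj v u}.ncard = 1

def IsK3QPDS {V : Type*} (G : SimpleGraph V) (S : Set V) : Prop :=
  IsQPDS G S ∧ ∀ v ∈ S, ∃ a b, a ≠ b ∧ G.Adj a b ∧ {u | u ∈ S ∧ G.Adj v u} = {a, b}

def IsIndep {V : Type*} (G : SimpleGraph V) (S : Set V) : Prop :=
  ∀ a ∈ S, ∀ b ∈ S, ¬ G.Adj a b

/-- `P` is a component of the `K₂`-QPDS `S`: an adjacent pair of vertices of `S`. -/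
def IsComp (S P : Set (ℤ × ℤ)) : Prop :=
  ∃ a b, a ∈ S ∧ b ∈ S ∧ triLattice.Adj a b ∧ P = {a, b}

/-- The component `P` has the type represented by direction `d`. -/
def CompHasType (P : Set (ℤ × ℤ)) (d : ℤ × ℤ) : Prop :=
  ∃ a b, P = {a, b} ∧ (b - a = d ∨ b - a = -d)

/-- The graph distance between the components `P` and `Q` equals 3. -/
def CompDistEqThree (P Q : Set (ℤ × ℤ)) : Prop :=
  (∀ a ∈ P, ∀ b ∈ Q, 3 ≤ triLattice.dist a b) ∧
  (∃ a ∈ P, ∃ b ∈ Q, triLattice.dist a b = 3)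

/-- `S` has three components, pairwise at distance exactly 3, of types 1, 2 and 3
(in some order). -/
def HasRainbowTriple (S : Set (ℤ × ℤ)) : Prop :=
  ∃ P Q R : Set (ℤ × ℤ),
    IsComp S P ∧ IsComp S Q ∧ IsComp S R ∧
    CompDistEqThree P Q ∧ CompDistEqThree P R ∧ CompDistEqThree Q R ∧
    CompHasType P (0,1) ∧ CompHasType Q (1,0) ∧ CompHasType R (1,-1)

def triDirFinset : Finset (ℤ × ℤ) := {(1,0), (-1,0), (0,1), (0,-1), (1,-1), (-1,1)}

lemma coe_triDirFinset : (triDirFinset : Set (ℤ × ℤ)) = triDirs := by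
  simp [triDirFinset, triDirs]

lemma neg_mem_triDirs {d : ℤ × ℤ} (hd : d ∈ triDirs) : -d ∈ triDirs := by
  simp only [triDirs, Set.mem_insert_iff, Set.mem_singleton_iff] at hd ⊢
  rcases hd with rfl | rfl | rfl | rfl | rfl | rfl <;> simp

lemma triLattice_adj_iff {u v : ℤ × ℤ} : triLattice.Adj u v ↔ v - u ∈ triDirFinset := by
  rw [← Finset.mem_coe, coe_triDirFinset, triLattice, fromRel_adj]
  refine ⟨fun ⟨_, h⟩ => h.elim (fun h => by simpa using neg_mem_triDirs h) id,
    fun h => ⟨fun huv => ?_, Or.inr h⟩⟩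
  subst huv
  simp [triDirs, Prod.ext_iff] at h

def hexNorm (p : ℤ × ℤ) : ℕ := (p.1.natAbs + p.2.natAbs + (p.1 + p.2).natAbs) / 2

lemma hexNorm_add_le (p q : ℤ × ℤ) : hexNorm (p + q) ≤ hexNorm p + hexNorm q := by
  simp only [hexNorm, Prod.fst_add, Prod.snd_add]
  omega

lemma hexNorm_eq_zero {p : ℤ × ℤ} : hexNorm p = 0 ↔ p = 0 := by
  simp only [hexNorm, Prod.ext_iff, Prod.fst_zero, Prod.snd_zero]
  omega

lemma hexNorm_eq_one_of_mem {d : ℤ × ℤ} (hd : d ∈ triDirFinset) : hexNorm d = 1 := by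
  simp only [triDirFinset, Finset.mem_insert, Finset.mem_singleton] at hd
  rcases hd with rfl | rfl | rfl | rfl | rfl | rfl <;> rfl

lemma exists_hexNorm_sub_add_one {p : ℤ × ℤ} (hp : p ≠ 0) :
    ∃ d ∈ triDirFinset, hexNorm (p - d) + 1 = hexNorm p := by
  obtain ⟨x, y⟩ := p
  simp only [triDirFinset, Finset.mem_insert, Finset.mem_singleton, exists_eq_or_imp,
    exists_eq_left, hexNorm, Prod.mk_sub_mk]
  simp only [ne_eq, Prod.mk_eq_zero] at hp
  omega

lemma hexNorm_sub_le_length {u v : ℤ × ℤ} (w : triLattice.Walk u v) :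
    hexNorm (v - u) ≤ w.length := by
  induction w with
  | nil => simp [hexNorm]
  | @cons u x v hux _ ih =>
    rw [triLattice_adj_iff] at hux
    calc hexNorm (v - u) = hexNorm ((x - u) + (v - x)) := by rw [sub_add_sub_cancel']
      _ ≤ 1 + _ := (hexNorm_add_le _ _).trans (by rw [hexNorm_eq_one_of_mem hux])
      _ ≤ _ := by rw [Walk.length_cons]; omega

lemma exists_walk_length_eq_hexNorm (u v : ℤ × ℤ) :
    ∃ w : triLattice.Walk u v, w.length = hexNorm (v - u) := by
  induction h : hexNorm (v - u) generalizing v with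
  | zero =>
    obtain rfl := sub_eq_zero.mp (hexNorm_eq_zero.mp h)
    exact ⟨.nil, rfl⟩
  | succ n ih =>
    obtain ⟨d, hd, hnorm⟩ := exists_hexNorm_sub_add_one (p := v - u)
      (fun h0 => by simp [h0, hexNorm] at h)
    obtain ⟨w, hw⟩ := ih (v - d) (by rw [sub_right_comm]; omega)
    refine ⟨w.concat (triLattice_adj_iff.mpr (by simpa using hd)), by simp [hw]⟩

theorem triLattice_dist_eq (u v : ℤ × ℤ) : triLattice.dist u v = hexNorm (v - u) := by
  obtain ⟨w, hw⟩ := exists_walk_length_eq_hexNorm u v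
  obtain ⟨w', hw'⟩ := w.reachable.exists_walk_length_eq_dist
  exact le_antisymm (hw ▸ dist_le w) (hw' ▸ hexNorm_sub_le_length w')

lemma compDistEqThree_coe_iff (P Q : Finset (ℤ × ℤ)) :
    CompDistEqThree P Q ↔
      (∀ a ∈ P, ∀ b ∈ Q, 3 ≤ hexNorm (b - a)) ∧ ∃ a ∈ P, ∃ b ∈ Q, hexNorm (b - a) = 3 := by
  simp only [CompDistEqThree, Finset.mem_coe, triLattice_dist_eq]

lemma hasRainbowTriple_of {S : Set (ℤ × ℤ)} {p₁ p₂ q₁ q₂ r₁ r₂ : ℤ × ℤ}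
    (hmem : p₁ ∈ S ∧ p₂ ∈ S ∧ q₁ ∈ S ∧ q₂ ∈ S ∧ r₁ ∈ S ∧ r₂ ∈ S)
    (hp : p₂ - p₁ = (0, 1)) (hq : q₂ - q₁ = (1, 0)) (hr : r₂ - r₁ = (1, -1))
    (hdist : CompDistEqThree ({p₁, p₂} : Finset _) ({q₁, q₂} : Finset _) ∧
      CompDistEqThree ({p₁, p₂} : Finset _) ({r₁, r₂} : Finset _) ∧
      CompDistEqThree ({q₁, q₂} : Finset _) ({r₁, r₂} : Finset _)) :
    HasRainbowTriple S := by
  obtain ⟨hp₁, hp₂, hq₁, hq₂, hr₁, hr₂⟩ := hmem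
  obtain ⟨hpq, hpr, hqr⟩ := hdist
  simp only [Finset.coe_insert, Finset.coe_singleton] at hpq hpr hqr
  have hadj {a b : ℤ × ℤ} {d} (hd : d ∈ triDirFinset) (h : b - a = d) : triLattice.Adj a b :=
    triLattice_adj_iff.mpr (h ▸ hd)
  exact ⟨_, _, _, ⟨p₁, p₂, hp₁, hp₂, hadj (by decide) hp, rfl⟩,
    ⟨q₁, q₂, hq₁, hq₂, hadj (by decide) hq, rfl⟩, ⟨r₁, r₂, hr₁, hr₂, hadj (by decide) hr, rfl⟩,
    hpq, hpr, hqr, ⟨_, _, rfl, .inl hp⟩, ⟨_, _, rfl, .inl hq⟩, ⟨_, _, rfl, .inl hr⟩⟩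

section Periodic

variable {m n : ℕ}

def modReduce (m n : ℕ) : ℤ × ℤ →+ ZMod m × ZMod n :=
  (Int.castAddHom (ZMod m)).prodMap (Int.castAddHom (ZMod n))

def periodicSet (F : Finset (ZMod m × ZMod n)) : Set (ℤ × ℤ) := modReduce m n ⁻¹' F

instance (F : Finset (ZMod m × ZMod n)) : DecidablePred (· ∈ periodicSet F) :=
  fun v => inferInstanceAs (Decidable (modReduce m n v ∈ F))

def periodicNbrCount (F : Finset (ZMod m × ZMod n)) (r : ZMod m × ZMod n) : ℕ :=
  (triDirFinset.filter fun d => r + modReduce m n d ∈ F).card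

lemma ncard_nbrs_periodicSet (F : Finset (ZMod m × ZMod n)) (v : ℤ × ℤ) :
    {u | u ∈ periodicSet F ∧ triLattice.Adj v u}.ncard = periodicNbrCount F (modReduce m n v) := by
  have hnbrs : {u | u ∈ periodicSet F ∧ triLattice.Adj v u}
      = (v + ·) '' {d ∈ triDirFinset | modReduce m n v + modReduce m n d ∈ F} := by
    ext u
    simp only [Set.mem_ofPred_eq, Set.mem_image, triLattice_adj_iff,
      periodicSet, Set.mem_preimage, Finset.mem_coe, ← map_add]
    exact ⟨fun ⟨hu, hd⟩ => ⟨u - v, ⟨hd, by simpa⟩, by abel⟩,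
      fun ⟨d, ⟨hd, hu⟩, hdu⟩ => hdu ▸ ⟨hu, by simpa⟩⟩
  rw [hnbrs, Set.ncard_image_of_injective _ (add_right_injective v), ← Finset.coe_filter,
    Set.ncard_coe_finset, periodicNbrCount]

lemma isK2QPDS_periodicSet (F : Finset (ZMod m × ZMod n))
    (h : ∀ r, (r ∈ F → periodicNbrCount F r = 1) ∧
      (r ∉ F → periodicNbrCount F r = 1 ∨ periodicNbrCount F r = 2)) :
    IsK2QPDS triLattice (periodicSet F) :=
  ⟨fun v hv => ncard_nbrs_periodicSet F v ▸ (h _).2 hv,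
    fun v hv => ncard_nbrs_periodicSet F v ▸ (h _).1 hv⟩

end Periodic

def tile₁ : Finset (ZMod 5 × ZMod 35) :=
  {(4,1), (1,2), (3,2), (0,3), (2,4), (2,5), (3,6), (4,6), (0,8), (2,9), (4,9), (1,10), (3,11),
   (3,12), (0,13), (4,13), (1,15), (0,16), (3,16), (2,17), (4,18), (4,19), (0,20), (1,20), (2,22),
   (1,23), (4,23), (3,24), (0,25), (0,26), (1,27), (2,27), (3,29), (0,30), (2,30), (4,31), (1,32),
   (1,33), (2,34), (3,34)}

def tile₂ : Finset (ZMod 6 × ZMod 12) :=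
  {(5,1), (1,2), (2,2), (5,2), (2,4), (1,5), (4,5), (5,5), (2,7), (2,8), (4,8), (5,8), (2,11),
   (4,11), (5,10), (1,11)}

set_option maxRecDepth 2000 in
lemma isK2QPDS_periodicSet_tile₁ : IsK2QPDS triLattice (periodicSet tile₁) :=
  isK2QPDS_periodicSet _ (by decide)

lemma isK2QPDS_periodicSet_tile₂ : IsK2QPDS triLattice (periodicSet tile₂) :=
  isK2QPDS_periodicSet _ (by decide)

lemma hasRainbowTriple_periodicSet_tile₁ : HasRainbowTriple (periodicSet tile₁) :=
  hasRainbowTriple_of (p₁ := (7,4)) (p₂ := (7,5)) (q₁ := (3,6)) (q₂ := (4,6))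
    (r₁ := (5,3)) (r₂ := (6,2)) (by decide) rfl rfl rfl
    (by simp only [compDistEqThree_coe_iff]; decide)

lemma hasRainbowTriple_periodicSet_tile₂ : HasRainbowTriple (periodicSet tile₂) :=
  hasRainbowTriple_of (p₁ := (8,7)) (p₂ := (8,8)) (q₁ := (4,8)) (q₂ := (5,8))
    (r₁ := (7,5)) (r₂ := (8,4)) (by decide) rfl rfl rfl
    (by simp only [compDistEqThree_coe_iff]; decide)

section Rhombus

variable {V V' : Type*}

def HasRhombusDiagonal (G : SimpleGraph V) (S : Set V) : Prop :=
  ∃ a ∈ S, ∃ b ∈ S, a ≠ b ∧ ¬ G.Adj a b ∧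
    ∃ w₁ w₂, w₁ ≠ w₂ ∧ G.Adj a w₁ ∧ G.Adj w₁ b ∧ G.Adj a w₂ ∧ G.Adj w₂ b

lemma HasRhombusDiagonal.image {G : SimpleGraph V} {G' : SimpleGraph V'} {S : Set V}
    (φ : G ≃g G') (h : HasRhombusDiagonal G S) :
    HasRhombusDiagonal G' (φ '' S) := by
  obtain ⟨a, ha, b, hb, hab, hnadj, w₁, w₂, hw, h₁, h₂, h₃, h₄⟩ := h
  exact ⟨φ a, ⟨a, ha, rfl⟩, φ b, ⟨b, hb, rfl⟩, φ.injective.ne hab, φ.map_adj_iff.not.mpr hnadj,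
    φ w₁, φ w₂, φ.injective.ne hw, φ.map_adj_iff.mpr h₁, φ.map_adj_iff.mpr h₂,
    φ.map_adj_iff.mpr h₃, φ.map_adj_iff.mpr h₄⟩

end Rhombus

def triDiagonals : Finset (ℤ × ℤ) := {(1,1), (-1,-1), (2,-1), (-2,1), (1,-2), (-1,2)}

lemma mem_triDiagonals_iff {d : ℤ × ℤ} :
    d ∈ triDiagonals ↔ d ≠ 0 ∧ d ∉ triDirFinset ∧
      ∃ e₁ ∈ triDirFinset, ∃ e₂ ∈ triDirFinset,
        e₁ ≠ e₂ ∧ d - e₁ ∈ triDirFinset ∧ d - e₂ ∈ triDirFinset := by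
  constructor
  · revert d
    decide
  · rintro ⟨hd₀, hd, e₁, he₁, e₂, he₂, he, hf₁, hf₂⟩
    have key : ∀ e₁ ∈ triDirFinset, ∀ f ∈ triDirFinset, ∀ e₂ ∈ triDirFinset, e₁ ≠ e₂ →
        e₁ + f - e₂ ∈ triDirFinset → e₁ + f ∉ triDirFinset → e₁ + f ≠ 0 →
        e₁ + f ∈ triDiagonals := by
      decide
    simpa using key e₁ he₁ _ hf₁ e₂ he₂ he (by simpa using hf₂) (by simpa using hd)
      (by simpa using hd₀)

lemma hasRhombusDiagonal_triLattice_iff {S : Set (ℤ × ℤ)} :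
    HasRhombusDiagonal triLattice S ↔ ∃ a ∈ S, ∃ b ∈ S, b - a ∈ triDiagonals := by
  simp only [HasRhombusDiagonal, triLattice_adj_iff, mem_triDiagonals_iff]
  constructor
  · rintro ⟨a, ha, b, hb, hab, hn, w₁, w₂, hw, h₁, h₂, h₃, h₄⟩
    refine ⟨a, ha, b, hb, sub_ne_zero.mpr hab.symm, hn, w₁ - a, h₁, w₂ - a, h₃,
      (sub_left_injective.ne hw), ?_, ?_⟩ <;> rwa [sub_sub_sub_cancel_right]
  · rintro ⟨a, ha, b, hb, hab, hn, e₁, he₁, e₂, he₂, he, hf₁, hf₂⟩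
    refine ⟨a, ha, b, hb, (sub_ne_zero.mp hab).symm, hn, a + e₁, a + e₂,
      (add_right_injective a).ne he, ?_, ?_, ?_, ?_⟩ <;>
      simpa only [add_sub_cancel_left, sub_add_eq_sub_sub]

lemma hasRhombusDiagonal_periodicSet_tile₁ : HasRhombusDiagonal triLattice (periodicSet tile₁) :=
  hasRhombusDiagonal_triLattice_iff.mpr ⟨(3,2), by decide, (2,4), by decide, by decide⟩

lemma not_hasRhombusDiagonal_periodicSet_tile₂ :
    ¬ HasRhombusDiagonal triLattice (periodicSet tile₂) := by
  have key : ∀ r ∈ tile₂, ∀ d ∈ triDiagonals, r + modReduce 6 12 d ∉ tile₂ := by decide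
  rw [hasRhombusDiagonal_triLattice_iff]
  rintro ⟨a, ha, b, hb, hd⟩
  exact key _ ha _ hd (by rwa [← map_add, add_sub_cancel])

/-- Up to symmetry, there are at least two `K₂`-QPDSs in the triangular lattice
with three pairwise adjacent components of the three different types. -/
theorem two_K2_QPDSs_with_rainbow_triples :
    ∃ S S' : Set (ℤ × ℤ),
      IsK2QPDS triLattice S ∧ IsK2QPDS triLattice S' ∧
      HasRainbowTriple S ∧ HasRainbowTriple S' ∧
      ¬ ∃ φ : triLattice ≃g triLattice, ⇑φ '' S = S' := by
  refine ⟨_, _, isK2QPDS_periodicSet_tile₁, isK2QPDS_periodicSet_tile₂,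
    hasRainbowTriple_periodicSet_tile₁, hasRainbowTriple_periodicSet_tile₂, ?_⟩
  rintro ⟨φ, hφ⟩
  exact not_hasRhombusDiagonal_periodicSet_tile₂
    (hφ ▸ hasRhombusDiagonal_periodicSet_tile₁.image φ)
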